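/- arXiv:2501.09835 — 9 statements merged into one kernel-verified Lean document; each statement's English description precedes it below -/
import Mathlib

section
/- In the three-state example with Ω = {ω₁,ω₂,ω₃}, field 𝒜 = ℳ generated by the partition {{ω₁,ω₂},{ω₃}}, types t(ω₁) = t(ω₂) = (0.9, 0.1, 0) and t(ω₃) = (0,0,1), the probability vector p = (0.1, 0, 0.9) is conglomerable with respect to (ℳ,t) but not disintegrable. -/
open Finset

/-- Types of the three-state example: `t(ω₁)=t(ω₂)=(0.9,0.1,0)`, `t(ω₃)=(0,0,1)`. -/
noncomputable def tEx : Fin 3 → Fin 3 → ℝ :=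
  ![![9/10, 1/10, 0], ![9/10, 1/10, 0], ![0, 0, 1]]

/-- The probability vector `p = (0.1, 0, 0.9)`. -/
noncomputable def pEx : Fin 3 → ℝ := ![1/10, 0, 9/10]

/-- The field `ℳ` generated by the partition `{{ω₁,ω₂},{ω₃}}`. -/
def MEx : Set (Finset (Fin 3)) := {∅, {0, 1}, {2}, Finset.univ}

/-!
Write `ω₁, ω₂, ω₃` for `0, 1, 2 : Fin 3`. Every event `E` lies between the `t`-probabilities of
two states: if `ω₃ ∈ E` then `t(ω₃, E) = 1` bounds `p(E)` from above and `t(ω₁, E) ≤ p(E)`;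
otherwise `t(ω₃, E) = 0` bounds it from below and `p(E) = 0.1·[ω₁ ∈ E] ≤ t(ω₁, E)`.
Disintegrability fails on the atom `{ω₁, ω₂}`: it would force
`p(ω₁) = t(ω₁, {ω₁}) · p({ω₁, ω₂}) = 0.9 · 0.1`, whereas `p(ω₁) = 0.1`.
-/

section General

variable {Ω : Type*}

def IsConglomerable (t : Ω → Ω → ℝ) (p : Ω → ℝ) : Prop :=
  ∀ E : Finset Ω,
    (⨅ ω, ∑ a ∈ E, t ω a) ≤ ∑ a ∈ E, p a ∧ (∑ a ∈ E, p a) ≤ ⨆ ω, ∑ a ∈ E, t ω a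

def IsDisintegrable [DecidableEq Ω] (M : Set (Finset Ω)) (t : Ω → Ω → ℝ) (p : Ω → ℝ) : Prop :=
  ∀ E F : Finset Ω, F ∈ M → ∑ a ∈ E ∩ F, p a = ∑ ω ∈ F, (∑ a ∈ E, t ω a) * p ω

theorem isConglomerable_of_forall_exists [Finite Ω] {t : Ω → Ω → ℝ} {p : Ω → ℝ}
    (h : ∀ E : Finset Ω, ∃ ω₁ ω₂,
      ∑ a ∈ E, t ω₁ a ≤ ∑ a ∈ E, p a ∧ ∑ a ∈ E, p a ≤ ∑ a ∈ E, t ω₂ a) :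
    IsConglomerable t p := by
  intro E
  obtain ⟨ω₁, ω₂, h₁, h₂⟩ := h E
  exact ⟨ciInf_le_of_le (Set.finite_range _).bddBelow ω₁ h₁,
    le_ciSup_of_le (Set.finite_range _).bddAbove ω₂ h₂⟩

end General

theorem Fin.sum_three_eq_ite {M : Type*} [AddCommMonoid M] (E : Finset (Fin 3)) (f : Fin 3 → M) :
    ∑ a ∈ E, f a = (if 0 ∈ E then f 0 else 0) + (if 1 ∈ E then f 1 else 0) +
      (if 2 ∈ E then f 2 else 0) := by
  rw [← Fin.sum_univ_three (fun a ↦ if a ∈ E then f a else 0), Finset.sum_ite_mem,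
    Finset.univ_inter]

theorem exists_sum_tEx_le_sum_pEx_le_sum_tEx (E : Finset (Fin 3)) : ∃ ω₁ ω₂,
    ∑ a ∈ E, tEx ω₁ a ≤ ∑ a ∈ E, pEx a ∧ ∑ a ∈ E, pEx a ≤ ∑ a ∈ E, tEx ω₂ a := by
  by_cases hω₃ : (2 : Fin 3) ∈ E
  · refine ⟨0, 2, ?_⟩
    simp only [Fin.sum_three_eq_ite, tEx, pEx, hω₃, ↓reduceIte, Matrix.cons_val]
    split_ifs <;> norm_num
  · refine ⟨2, 0, ?_⟩
    simp only [Fin.sum_three_eq_ite, tEx, pEx, hω₃, ↓reduceIte, Matrix.cons_val]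
    split_ifs <;> norm_num

theorem isConglomerable_tEx_pEx : IsConglomerable tEx pEx :=
  isConglomerable_of_forall_exists exists_sum_tEx_le_sum_pEx_le_sum_tEx

theorem not_isDisintegrable_MEx_tEx_pEx : ¬ IsDisintegrable MEx tEx pEx := by
  intro h
  have h_atom := h {0} {0, 1} (by simp [MEx])
  norm_num [tEx, pEx] at h_atom

/-- `p` is conglomerable with respect to `(ℳ,t)` but not disintegrable. -/
theorem stmt_1 :
    (∀ E : Finset (Fin 3),
      (⨅ ω, ∑ a ∈ E, tEx ω a) ≤ ∑ a ∈ E, pEx a ∧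
      (∑ a ∈ E, pEx a) ≤ ⨆ ω, ∑ a ∈ E, tEx ω a) ∧
    ¬ (∀ (E F : Finset (Fin 3)), F ∈ MEx →
        ∑ a ∈ E ∩ F, pEx a = ∑ ω ∈ F, (∑ a ∈ E, tEx ω a) * pEx ω) :=
  ⟨isConglomerable_tEx_pEx, not_isDisintegrable_MEx_tEx_pEx⟩
end

section
/- In a finite single-player type space, a probability distribution P on Ω is disintegrable with respect to (ℳ,t) if and only if P lies in the convex hull of the set of types {t(ω,·) : ω ∈ Ω}. -/
open Finset

/-- in a finite single-player type space (knowledge field given by the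
equivalence relation `r`), a probability distribution `P` is `(ℳ,t)`-disintegrable
iff it lies in the convex hull of the types. -/
theorem stmt_2 {Ω : Type*} [Fintype Ω] [DecidableEq Ω]
    (r : Ω → Ω → Prop) (hr : Equivalence r)
    (t : Ω → Ω → ℝ)
    (ht0 : ∀ ω a, 0 ≤ t ω a) (ht1 : ∀ ω, ∑ a, t ω a = 1)
    (hmeas : ∀ ω ω', r ω ω' → t ω = t ω')
    (hatom : ∀ ω a, ¬ r ω a → t ω a = 0)
    (P : Ω → ℝ) (hP0 : ∀ a, 0 ≤ P a) (hP1 : ∑ a, P a = 1) :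
    (∀ (E F : Finset Ω), (∀ a b, r a b → (a ∈ F ↔ b ∈ F)) →
        ∑ ω ∈ E ∩ F, P ω = ∑ ω ∈ F, (∑ a ∈ E, t ω a) * P ω) ↔
      P ∈ convexHull ℝ (Set.range t) := by
  constructor
  · intro h
    have key : ∀ a, P a = ∑ ω, t ω a * P ω := by
      intro a
      have h2 := h {a} univ (by intro x y _; simp)
      simpa using h2
    have hPeq : P = ∑ ω, P ω • t ω := by
      funext a
      rw [key a]
      simp [Finset.sum_apply, mul_comm]
    rw [hPeq, ← Finset.centerMass_eq_of_sum_1 _ t hP1]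
    exact Finset.centerMass_mem_convexHull _ (fun i _ => hP0 i) (by rw [hP1]; norm_num)
      (fun i _ => Set.mem_range_self i)
  · intro hP E F hF
    have key : convexHull ℝ (Set.range t) ⊆
        {Q : Ω → ℝ | ∑ ω ∈ E ∩ F, Q ω = ∑ ω ∈ F, (∑ a ∈ E, t ω a) * Q ω} := by
      apply convexHull_min
      · rintro _ ⟨ω₀, rfl⟩
        simp only [Set.mem_setOf_eq]
        have hrw : ∀ ω, (∑ a ∈ E, t ω a) * t ω₀ ω = (∑ a ∈ E, t ω₀ a) * t ω₀ ω := by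
          intro ω
          by_cases h0 : t ω₀ ω = 0
          · simp [h0]
          · have hrel : r ω₀ ω := by
              by_contra hc; exact h0 (hatom ω₀ ω hc)
            rw [hmeas ω₀ ω hrel]
        simp_rw [hrw, ← Finset.mul_sum]
        by_cases hω : ω₀ ∈ F
        · have h1 : ∑ ω ∈ F, t ω₀ ω = 1 := by
            rw [← ht1 ω₀]
            apply Finset.sum_subset (Finset.subset_univ F)
            intro x _ hx
            apply hatom
            intro hc
            exact hx ((hF ω₀ x hc).mp hω)
          have h2 : ∑ ω ∈ E ∩ F, t ω₀ ω = ∑ ω ∈ E, t ω₀ ω := by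
            apply Finset.sum_subset Finset.inter_subset_left
            intro x hxE hx
            apply hatom
            intro hc
            exact hx (Finset.mem_inter.mpr ⟨hxE, (hF ω₀ x hc).mp hω⟩)
          rw [h1, h2, mul_one]
        · have h1 : ∑ ω ∈ F, t ω₀ ω = 0 := by
            apply Finset.sum_eq_zero
            intro x hx
            apply hatom
            intro hc
            exact hω ((hF ω₀ x hc).mpr hx)
          have h2 : ∑ ω ∈ E ∩ F, t ω₀ ω = 0 := by
            apply Finset.sum_eq_zero
            intro x hx
            apply hatom
            intro hc
            exact hω ((hF ω₀ x hc).mpr (Finset.mem_inter.mp hx).2)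
          rw [h1, h2, mul_zero]
      · intro Q hQ R hR a b _ _ _
        simp only [Set.mem_setOf_eq] at hQ hR ⊢
        have hrw : ∀ ω, (∑ x ∈ E, t ω x) * (a • Q + b • R) ω
            = a * ((∑ x ∈ E, t ω x) * Q ω) + b * ((∑ x ∈ E, t ω x) * R ω) := by
          intro ω; simp only [Pi.add_apply, Pi.smul_apply, smul_eq_mul]; ring
        simp_rw [hrw, Pi.add_apply, Pi.smul_apply, smul_eq_mul,
          Finset.sum_add_distrib, ← Finset.mul_sum, hQ, hR]
    exact key hP
end

section
/- In a finite single-player type space, a probability distribution P over Ω is either disintegrable with respect to (ℳ,t) or a money pump, but not both; i.e., P lies in the convex hull of the types if and only if there is no function f : Ω → ℝ with Σ_ω f(ω) t(ω',{ω}) ≥ 0 for all ω' ∈ Ω and Σ_ω f(ω) P({ω}) < 0. -/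
/-!
This is Farkas' lemma. A bet non-negative on every type is non-negative on their convex hull,
since expectation is linear. Conversely, the convex hull of finitely many types is compact, so
a `P` outside it is strictly separated from it by some `g ⬝ᵥ ·` and level `u`; as the types and
`P` are probability vectors, the bet `u • 1 - g` has expectation `u - g ⬝ᵥ q` under each of them,
which is positive on the types and negative under `P`.
-/

section

variable {ι : Type*} [Fintype ι]

theorem dotProduct_nonneg_of_mem_convexHull {S : Set (ι → ℝ)} {f : ι → ℝ}
    (hf : ∀ s ∈ S, 0 ≤ f ⬝ᵥ s) {p : ι → ℝ} (hp : p ∈ convexHull ℝ S) : 0 ≤ f ⬝ᵥ p :=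
  convexHull_min hf (convex_halfSpace_ge ⟨dotProduct_add f, fun c x ↦ dotProduct_smul c f x⟩ 0) hp

theorem exists_dotProduct_lt_of_notMem_convexHull {S : Set (ι → ℝ)} (hS : S.Finite)
    {p : ι → ℝ} (hp : p ∉ convexHull ℝ S) :
    ∃ g : ι → ℝ, ∃ u : ℝ, (∀ s ∈ S, g ⬝ᵥ s < u) ∧ u < g ⬝ᵥ p := by
  classical
  obtain ⟨φ, u, hlt, hgt⟩ := geometric_hahn_banach_closed_point (convex_convexHull ℝ S)
    (hS.isCompact_convexHull (𝕜 := ℝ)).isClosed hp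
  have hφ (x : ι → ℝ) : (dotProductEquiv ℝ ι).symm φ ⬝ᵥ x = φ x :=
    LinearMap.congr_fun ((dotProductEquiv ℝ ι).apply_symm_apply φ.toLinearMap) x
  exact ⟨_, u, fun s hs ↦ (hφ s).trans_lt (hlt s (subset_convexHull ℝ S hs)), (hφ p).symm ▸ hgt⟩

theorem mem_convexHull_iff_not_exists_dotProduct_neg {S : Set (ι → ℝ)} (hS : S.Finite)
    (hS1 : ∀ s ∈ S, ∑ i, s i = 1) {p : ι → ℝ} (hp1 : ∑ i, p i = 1) :
    p ∈ convexHull ℝ S ↔ ¬ ∃ f : ι → ℝ, (∀ s ∈ S, 0 ≤ f ⬝ᵥ s) ∧ f ⬝ᵥ p < 0 := by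
  refine ⟨fun hp ⟨f, hfS, hfp⟩ ↦ (dotProduct_nonneg_of_mem_convexHull hfS hp).not_gt hfp,
    fun h ↦ ?_⟩
  by_contra hp
  obtain ⟨g, u, hgS, hgp⟩ := exists_dotProduct_lt_of_notMem_convexHull hS hp
  have shift (x : ι → ℝ) (hx : ∑ i, x i = 1) : (u • 1 - g) ⬝ᵥ x = u - g ⬝ᵥ x := by
    rw [sub_dotProduct, smul_dotProduct, one_dotProduct, hx, smul_eq_mul, mul_one]
  refine h ⟨u • 1 - g, fun s hs ↦ ?_, ?_⟩
  · rw [shift s (hS1 s hs)]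
    linarith [hgS s hs]
  · rw [shift p hp1]
    linarith

end

theorem stmt_3_general {Ω : Type*} [Fintype Ω]
    (t : Ω → Ω → ℝ)
    (ht1 : ∀ ω, ∑ a, t ω a = 1)
    (P : Ω → ℝ) (hP1 : ∑ a, P a = 1) :
    P ∈ convexHull ℝ (Set.range t) ↔
      ¬ ∃ f : Ω → ℝ, (∀ ω', 0 ≤ ∑ ω, f ω * t ω' ω) ∧ ∑ ω, f ω * P ω < 0 := by
  rw [mem_convexHull_iff_not_exists_dotProduct_neg (Set.finite_range t)
    (Set.forall_mem_range.2 ht1) hP1]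
  simp only [Set.forall_mem_range, dotProduct]

/-- in a finite single-player type space, a probability distribution is either
disintegrable (equivalently, in the convex hull of the types) or a money pump, but not both:
`P` is in the convex hull of the types iff there is no non-negative valued bet with strictly
negative expectation under `P`. -/
theorem stmt_3 {Ω : Type*} [Fintype Ω] [DecidableEq Ω]
    (r : Ω → Ω → Prop) (hr : Equivalence r)
    (t : Ω → Ω → ℝ)
    (ht0 : ∀ ω a, 0 ≤ t ω a) (ht1 : ∀ ω, ∑ a, t ω a = 1)
    (hmeas : ∀ ω ω', r ω ω' → t ω = t ω')
    (hatom : ∀ ω a, ¬ r ω a → t ω a = 0)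
    (P : Ω → ℝ) (hP0 : ∀ a, 0 ≤ P a) (hP1 : ∑ a, P a = 1) :
    P ∈ convexHull ℝ (Set.range t) ↔
      ¬ ∃ f : Ω → ℝ, (∀ ω', 0 ≤ ∑ ω, f ω * t ω' ω) ∧ ∑ ω, f ω * P ω < 0 :=
  stmt_3_general t ht1 P hP1
end

section
/- The union of finitely many I-common certainty components of a type space is an I-common certainty component, and the intersection of finitely many I-common certainty components, if nonempty, is an I-common certainty component. -/
/-- A field (algebra) of subsets of `Ω`. -/
def IsSetField {Ω : Type*} (𝒜 : Set (Set Ω)) : Prop :=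
  Set.univ ∈ 𝒜 ∧ (∀ A ∈ 𝒜, Aᶜ ∈ 𝒜) ∧ ∀ A ∈ 𝒜, ∀ B ∈ 𝒜, A ∪ B ∈ 𝒜

/-- A probability charge on the field `𝒜`. -/
def IsProbCharge {Ω : Type*} (𝒜 : Set (Set Ω)) (μ : Set Ω → ℝ) : Prop :=
  μ Set.univ = 1 ∧ (∀ A ∈ 𝒜, 0 ≤ μ A) ∧
    ∀ A ∈ 𝒜, ∀ B ∈ 𝒜, Disjoint A B → μ (A ∪ B) = μ A + μ B

/-- `S` is an `I`-common certainty component of the type space with events `𝒜` and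
type functions `t`. -/
def IsCCC {Ω ι : Type*} (𝒜 : Set (Set Ω)) (t : ι → Ω → Set Ω → ℝ) (I : Set ι)
    (S : Set Ω) : Prop :=
  S.Nonempty ∧ ∃ E ∈ 𝒜, E ⊆ S ∧ ∀ ω ∈ S, ∀ i ∈ I, t i ω E = 1

/-! If `E ⊆ S` and `F ⊆ T` witness two components, then `E ∪ F` witnesses `S ∪ T`, since a
charge is monotone and bounded by `1`, and `E ∩ F` witnesses `S ∩ T`, since two events of
probability one meet in an event of probability one. Finite unions and intersections follow by
induction, the empty intersection being the component `Ω` itself. -/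

open Set MeasureTheory

theorem IsSetField.isSetAlgebra {Ω : Type*} {𝒜 : Set (Set Ω)} (h𝒜 : IsSetField 𝒜) :
    IsSetAlgebra 𝒜 where
  empty_mem := compl_univ (α := Ω) ▸ h𝒜.2.1 _ h𝒜.1
  compl_mem := h𝒜.2.1
  union_mem _ _ hA hB := h𝒜.2.2 _ hA _ hB

namespace IsProbCharge

variable {Ω : Type*} {𝒜 : Set (Set Ω)} {μ : Set Ω → ℝ} {A B : Set Ω}

theorem inter_add_sdiff (hμ : IsProbCharge 𝒜 μ) (h𝒜 : IsSetAlgebra 𝒜) (hA : A ∈ 𝒜)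
    (hB : B ∈ 𝒜) : μ (B ∩ A) + μ (B \ A) = μ B := by
  rw [← hμ.2.2 _ (h𝒜.inter_mem hB hA) _ (h𝒜.sdiff_mem hB hA) (disjoint_sdiff_inter.symm),
    inter_union_sdiff]

theorem union_eq_add_sdiff (hμ : IsProbCharge 𝒜 μ) (h𝒜 : IsSetAlgebra 𝒜) (hA : A ∈ 𝒜)
    (hB : B ∈ 𝒜) : μ (A ∪ B) = μ A + μ (B \ A) := by
  rw [← hμ.2.2 _ hA _ (h𝒜.sdiff_mem hB hA) disjoint_sdiff_right, union_sdiff_self]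

theorem mono (hμ : IsProbCharge 𝒜 μ) (h𝒜 : IsSetAlgebra 𝒜) (hA : A ∈ 𝒜) (hB : B ∈ 𝒜)
    (hAB : A ⊆ B) : μ A ≤ μ B := by
  have h := hμ.inter_add_sdiff h𝒜 hA hB
  rw [inter_eq_right.mpr hAB] at h
  linarith [hμ.2.1 _ (h𝒜.sdiff_mem hB hA)]

theorem le_one (hμ : IsProbCharge 𝒜 μ) (h𝒜 : IsSetAlgebra 𝒜) (hA : A ∈ 𝒜) : μ A ≤ 1 :=
  hμ.1 ▸ hμ.mono h𝒜 hA h𝒜.univ_mem (subset_univ A)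

theorem eq_one_of_subset (hμ : IsProbCharge 𝒜 μ) (h𝒜 : IsSetAlgebra 𝒜) (hA : A ∈ 𝒜)
    (hB : B ∈ 𝒜) (hAB : A ⊆ B) (h1 : μ A = 1) : μ B = 1 :=
  le_antisymm (hμ.le_one h𝒜 hB) (h1 ▸ hμ.mono h𝒜 hA hB hAB)

theorem inter_eq_one (hμ : IsProbCharge 𝒜 μ) (h𝒜 : IsSetAlgebra 𝒜) (hA : A ∈ 𝒜)
    (hB : B ∈ 𝒜) (hA1 : μ A = 1) (hB1 : μ B = 1) : μ (A ∩ B) = 1 := by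
  -- `μ (A ∪ B) ≤ 1` forces `μ (B \ A) = 0`, hence `μ (B ∩ A) = μ B`.
  have hunion := hμ.union_eq_add_sdiff h𝒜 hA hB
  have hsplit := hμ.inter_add_sdiff h𝒜 hA hB
  rw [inter_comm] at hsplit
  linarith [hμ.le_one h𝒜 (h𝒜.union_mem hA hB), hμ.le_one h𝒜 (h𝒜.inter_mem hA hB)]

end IsProbCharge

theorem isCCC_univ {Ω ι : Type*} {𝒜 : Set (Set Ω)} {t : ι → Ω → Set Ω → ℝ} {I : Set ι}
    [Nonempty Ω] (h𝒜 : IsSetAlgebra 𝒜) (ht : ∀ i ω, IsProbCharge 𝒜 (t i ω)) :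
    IsCCC 𝒜 t I univ :=
  ⟨univ_nonempty, univ, h𝒜.univ_mem, subset_rfl, fun ω _ i _ ↦ (ht i ω).1⟩

namespace IsCCC

variable {Ω ι : Type*} {𝒜 : Set (Set Ω)} {t : ι → Ω → Set Ω → ℝ} {I : Set ι} {S T : Set Ω}

theorem union (h𝒜 : IsSetAlgebra 𝒜) (ht : ∀ i ω, IsProbCharge 𝒜 (t i ω))
    (hS : IsCCC 𝒜 t I S) (hT : IsCCC 𝒜 t I T) : IsCCC 𝒜 t I (S ∪ T) := by
  obtain ⟨hSne, E, hE, hES, hEt⟩ := hS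
  obtain ⟨-, F, hF, hFT, hFt⟩ := hT
  have hEF := h𝒜.union_mem hE hF
  refine ⟨hSne.mono subset_union_left, E ∪ F, hEF, union_subset_union hES hFT, ?_⟩
  rintro ω (hω | hω) i hi
  · exact (ht i ω).eq_one_of_subset h𝒜 hE hEF subset_union_left (hEt ω hω i hi)
  · exact (ht i ω).eq_one_of_subset h𝒜 hF hEF subset_union_right (hFt ω hω i hi)

theorem inter (h𝒜 : IsSetAlgebra 𝒜) (ht : ∀ i ω, IsProbCharge 𝒜 (t i ω))
    (hS : IsCCC 𝒜 t I S) (hT : IsCCC 𝒜 t I T) (hne : (S ∩ T).Nonempty) :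
    IsCCC 𝒜 t I (S ∩ T) := by
  obtain ⟨-, E, hE, hES, hEt⟩ := hS
  obtain ⟨-, F, hF, hFT, hFt⟩ := hT
  refine ⟨hne, E ∩ F, h𝒜.inter_mem hE hF, inter_subset_inter hES hFT, ?_⟩
  rintro ω ⟨hωS, hωT⟩ i hi
  exact (ht i ω).inter_eq_one h𝒜 hE hF (hEt ω hωS i hi) (hFt ω hωT i hi)

theorem biUnion {κ : Type*} (h𝒜 : IsSetAlgebra 𝒜) (ht : ∀ i ω, IsProbCharge 𝒜 (t i ω))
    {s : Finset κ} (hs : s.Nonempty) {S : κ → Set Ω} (hS : ∀ k ∈ s, IsCCC 𝒜 t I (S k)) :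
    IsCCC 𝒜 t I (⋃ k ∈ s, S k) := by
  classical
  induction hs using Finset.Nonempty.cons_induction with
  | singleton a => simpa using hS a (Finset.mem_singleton_self a)
  | cons a u _ _ ih =>
    simp only [Finset.mem_cons, forall_eq_or_imp] at hS
    rw [Finset.cons_eq_insert, Finset.set_biUnion_insert]
    exact hS.1.union h𝒜 ht (ih hS.2)

theorem biInter {κ : Type*} (h𝒜 : IsSetAlgebra 𝒜) (ht : ∀ i ω, IsProbCharge 𝒜 (t i ω))
    {s : Finset κ} {S : κ → Set Ω} (hS : ∀ k ∈ s, IsCCC 𝒜 t I (S k))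
    (hne : (⋂ k ∈ s, S k).Nonempty) : IsCCC 𝒜 t I (⋂ k ∈ s, S k) := by
  classical
  induction s using Finset.induction_on with
  | empty =>
    have : Nonempty Ω := hne.to_subtype.map Subtype.val
    simpa using isCCC_univ h𝒜 ht
  | insert a u _ ih =>
    simp only [Finset.mem_insert, forall_eq_or_imp] at hS
    rw [Finset.set_biInter_insert] at hne ⊢
    exact hS.1.inter h𝒜 ht (ih hS.2 (hne.mono inter_subset_right)) hne

end IsCCC

theorem stmt_5_general {Ω ι κ : Type*} (𝒜 : Set (Set Ω)) (h𝒜 : IsSetField 𝒜)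
    (t : ι → Ω → Set Ω → ℝ) (ht : ∀ i ω, IsProbCharge 𝒜 (t i ω))
    (I : Set ι) (s : Finset κ) (hs : s.Nonempty)
    (S : κ → Set Ω) (hS : ∀ k ∈ s, IsCCC 𝒜 t I (S k)) :
    IsCCC 𝒜 t I (⋃ k ∈ s, S k) ∧
    ((⋂ k ∈ s, S k).Nonempty → IsCCC 𝒜 t I (⋂ k ∈ s, S k)) :=
  ⟨IsCCC.biUnion h𝒜.isSetAlgebra ht hs hS, IsCCC.biInter h𝒜.isSetAlgebra ht hS⟩

/-- the union of finitely many `I`-common certainty components is an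
`I`-common certainty component, and so is a nonempty intersection of finitely many
`I`-common certainty components. -/
theorem stmt_5 {Ω ι κ : Type*} (𝒜 : Set (Set Ω)) (h𝒜 : IsSetField 𝒜)
    (M : ι → Set (Set Ω)) (hM : ∀ i, IsSetField (M i)) (hM𝒜 : ∀ i, M i ⊆ 𝒜)
    (t : ι → Ω → Set Ω → ℝ) (ht : ∀ i ω, IsProbCharge 𝒜 (t i ω))
    (htk : ∀ i ω, ∀ E ∈ M i, ω ∈ E → t i ω E = 1)
    (I : Set ι) (s : Finset κ) (hs : s.Nonempty)
    (S : κ → Set Ω) (hS : ∀ k ∈ s, IsCCC 𝒜 t I (S k)) :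
    IsCCC 𝒜 t I (⋃ k ∈ s, S k) ∧
    ((⋂ k ∈ s, S k).Nonempty → IsCCC 𝒜 t I (⋂ k ∈ s, S k)) :=
  stmt_5_general 𝒜 h𝒜 t ht I s hs S hS
end

section
/- Given a type space and an I-common certainty component S ⊆ Ω, the restriction structure ((S, 𝒜^S), {(S, ℳᵢ^S)}_{i∈I}, {tᵢ^S}_{i∈I}) — where 𝒜^S = {F ∩ S : F ∈ 𝒜}, ℳᵢ^S = {F ∩ S : F ∈ ℳᵢ}, and tᵢ^S(ω, F ∩ S) = tᵢ(ω, F) for ω ∈ S — is a well-defined type space; in particular, tᵢ^S is well defined: if F ∩ S = G ∩ S for F, G ∈ 𝒜 then tᵢ(ω,F) = tᵢ(ω,G) for every ω ∈ S and i ∈ I. -/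
/-- A field (algebra) of subsets of `Ω`, relative to an ambient set `U`. -/
def IsSetFieldOn {Ω : Type*} (U : Set Ω) (𝒜 : Set (Set Ω)) : Prop :=
  U ∈ 𝒜 ∧ (∀ A ∈ 𝒜, U \ A ∈ 𝒜) ∧ ∀ A ∈ 𝒜, ∀ B ∈ 𝒜, A ∪ B ∈ 𝒜

/-- The trace field `{F ∩ S : F ∈ 𝒜}` on `S`. -/
def traceField {Ω : Type*} (𝒜 : Set (Set Ω)) (S : Set Ω) : Set (Set Ω) :=
  {E | ∃ F ∈ 𝒜, E = F ∩ S}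

lemma field_inter {Ω : Type*} {𝒜 : Set (Set Ω)} (h : IsSetFieldOn Set.univ 𝒜)
    {A B : Set Ω} (hA : A ∈ 𝒜) (hB : B ∈ 𝒜) : A ∩ B ∈ 𝒜 := by
  obtain ⟨hu, hc, hun⟩ := h
  have : A ∩ B = Set.univ \ ((Set.univ \ A) ∪ (Set.univ \ B)) := by
    ext x; simp [not_or]
  rw [this]
  exact hc _ (hun _ (hc _ hA) _ (hc _ hB))

lemma field_diff {Ω : Type*} {𝒜 : Set (Set Ω)} (h : IsSetFieldOn Set.univ 𝒜)
    {A B : Set Ω} (hA : A ∈ 𝒜) (hB : B ∈ 𝒜) : A \ B ∈ 𝒜 := by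
  have : A \ B = A ∩ (Set.univ \ B) := by ext x; simp
  rw [this]; exact field_inter h hA (h.2.1 _ hB)

lemma charge_mono {Ω : Type*} {𝒜 : Set (Set Ω)} {μ : Set Ω → ℝ}
    (h : IsSetFieldOn Set.univ 𝒜) (hμ : IsProbCharge 𝒜 μ)
    {A B : Set Ω} (hA : A ∈ 𝒜) (hB : B ∈ 𝒜) (hAB : A ⊆ B) : μ A ≤ μ B := by
  obtain ⟨h1, hpos, hadd⟩ := hμ
  have hd : B \ A ∈ 𝒜 := field_diff h hB hA
  have : μ (A ∪ (B \ A)) = μ A + μ (B \ A) :=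
    hadd _ hA _ hd disjoint_sdiff_self_right
  have hu : A ∪ (B \ A) = B := Set.union_diff_cancel hAB
  rw [hu] at this
  linarith [hpos _ hd]

lemma charge_restrict {Ω : Type*} {𝒜 : Set (Set Ω)} {μ : Set Ω → ℝ}
    (h : IsSetFieldOn Set.univ 𝒜) (hμ : IsProbCharge 𝒜 μ)
    {E A : Set Ω} (hE : E ∈ 𝒜) (hE1 : μ E = 1) (hA : A ∈ 𝒜) :
    μ A = μ (A ∩ E) := by
  obtain ⟨h1, hpos, hadd⟩ := hμ
  have hcompl : Set.univ \ E ∈ 𝒜 := h.2.1 _ hE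
  have hec : μ (E ∪ (Set.univ \ E)) = μ E + μ (Set.univ \ E) :=
    hadd _ hE _ hcompl disjoint_sdiff_self_right
  rw [Set.union_diff_cancel (Set.subset_univ E)] at hec
  have hEc0 : μ (Set.univ \ E) = 0 := by linarith
  have hAE : A ∩ E ∈ 𝒜 := field_inter h hA hE
  have hAdE : A \ E ∈ 𝒜 := field_diff h hA hE
  have hsplit : μ ((A ∩ E) ∪ (A \ E)) = μ (A ∩ E) + μ (A \ E) := by
    refine hadd _ hAE _ hAdE ?_
    exact Set.disjoint_left.mpr fun x hx hx' => hx'.2 hx.2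
  rw [Set.inter_union_diff] at hsplit
  have hle : μ (A \ E) ≤ μ (Set.univ \ E) :=
    charge_mono h ⟨h1, hpos, hadd⟩ hAdE hcompl (Set.diff_subset_diff_left (Set.subset_univ A))
  have := hpos _ hAdE
  linarith

/-- the restriction of a type space to an `I`-common certainty component `S`
is a well-defined type space.  In particular the restricted type functions are well defined
(if `F ∩ S = G ∩ S` then `tᵢ(ω,F) = tᵢ(ω,G)` for all `ω ∈ S`, `i ∈ I`), the trace
families `𝒜^S` and `ℳᵢ^S` are fields on `S` with `ℳᵢ^S ⊆ 𝒜^S`, and the restricted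
beliefs are probability charges on `𝒜^S` (computed on representatives). -/
theorem stmt_6 {Ω ι : Type*} (𝒜 : Set (Set Ω)) (h𝒜 : IsSetFieldOn Set.univ 𝒜)
    (M : ι → Set (Set Ω)) (hM : ∀ i, IsSetFieldOn Set.univ (M i)) (hM𝒜 : ∀ i, M i ⊆ 𝒜)
    (t : ι → Ω → Set Ω → ℝ) (ht : ∀ i ω, IsProbCharge 𝒜 (t i ω))
    (htk : ∀ i ω, ∀ E ∈ M i, ω ∈ E → t i ω E = 1)
    (I : Set ι) (S : Set Ω) (hS : IsCCC 𝒜 t I S) :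
    (∀ i ∈ I, ∀ ω ∈ S, ∀ F ∈ 𝒜, ∀ G ∈ 𝒜, F ∩ S = G ∩ S → t i ω F = t i ω G) ∧
    IsSetFieldOn S (traceField 𝒜 S) ∧
    (∀ i ∈ I, IsSetFieldOn S (traceField (M i) S) ∧ traceField (M i) S ⊆ traceField 𝒜 S) ∧
    (∀ i ∈ I, ∀ ω ∈ S,
      (∀ F ∈ 𝒜, S ⊆ F → t i ω F = 1) ∧
      (∀ F ∈ 𝒜, ∀ G ∈ 𝒜, Disjoint (F ∩ S) (G ∩ S) →
        t i ω (F ∪ G) = t i ω F + t i ω G)) := by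
  obtain ⟨hne, E, hE𝒜, hES, hE1⟩ := hS
  -- trace field lemma
  have trace_field : ∀ (ℬ : Set (Set Ω)), IsSetFieldOn Set.univ ℬ →
      IsSetFieldOn S (traceField ℬ S) := by
    intro ℬ hℬ
    refine ⟨⟨Set.univ, hℬ.1, by simp⟩, ?_, ?_⟩
    · rintro A ⟨F, hF, rfl⟩
      exact ⟨Set.univ \ F, hℬ.2.1 _ hF, by ext x; simp; tauto⟩
    · rintro A ⟨F, hF, rfl⟩ B ⟨G, hG, rfl⟩
      exact ⟨F ∪ G, hℬ.2.2 _ hF _ hG, by ext x; simp; tauto⟩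
  have key : ∀ i ∈ I, ∀ ω ∈ S, ∀ F ∈ 𝒜, t i ω F = t i ω (F ∩ E) := fun i hi ω hω F hF =>
    charge_restrict h𝒜 (ht i ω) hE𝒜 (hE1 ω hω i hi) hF
  refine ⟨?_, trace_field 𝒜 h𝒜, fun i _ => ⟨trace_field (M i) (hM i), ?_⟩, ?_⟩
  · intro i hi ω hω F hF G hG hFG
    have hFE : F ∩ E = G ∩ E := by
      have : F ∩ E = (F ∩ S) ∩ E := by
        ext x; constructor
        · exact fun hx => ⟨⟨hx.1, hES hx.2⟩, hx.2⟩
        · exact fun hx => ⟨hx.1.1, hx.2⟩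
      have h2 : G ∩ E = (G ∩ S) ∩ E := by
        ext x; constructor
        · exact fun hx => ⟨⟨hx.1, hES hx.2⟩, hx.2⟩
        · exact fun hx => ⟨hx.1.1, hx.2⟩
      rw [this, h2, hFG]
    rw [key i hi ω hω F hF, key i hi ω hω G hG, hFE]
  · rintro A ⟨F, hF, rfl⟩
    exact ⟨F, hM𝒜 i hF, rfl⟩
  · intro i hi ω hω
    constructor
    · intro F hF hSF
      have h1 : t i ω E ≤ t i ω F := charge_mono h𝒜 (ht i ω) hE𝒜 hF (hES.trans hSF)
      have h2 : t i ω F ≤ t i ω Set.univ :=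
        charge_mono h𝒜 (ht i ω) hF h𝒜.1 (Set.subset_univ F)
      have := hE1 ω hω i hi
      have := (ht i ω).1
      linarith
    · intro F hF G hG hdis
      have hFE : F ∩ E ∈ 𝒜 := field_inter h𝒜 hF hE𝒜
      have hGE : G ∩ E ∈ 𝒜 := field_inter h𝒜 hG hE𝒜
      have hdis' : Disjoint (F ∩ E) (G ∩ E) := by
        refine Set.disjoint_left.mpr fun x hx hx' => ?_
        exact Set.disjoint_left.mp hdis ⟨hx.1, hES hx.2⟩ ⟨hx'.1, hES hx'.2⟩
      have hUE : (F ∪ G) ∩ E = (F ∩ E) ∪ (G ∩ E) := Set.union_inter_distrib_right F G E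
      calc t i ω (F ∪ G) = t i ω ((F ∪ G) ∩ E) :=
            key i hi ω hω _ (h𝒜.2.2 _ hF _ hG)
        _ = t i ω ((F ∩ E) ∪ (G ∩ E)) := by rw [hUE]
        _ = t i ω (F ∩ E) + t i ω (G ∩ E) := (ht i ω).2.2 _ hFE _ hGE hdis'
        _ = t i ω F + t i ω G := by rw [← key i hi ω hω F hF, ← key i hi ω hω G hG]
end

section
/- In the four-state two-player type space with Ω = {ω₁,ω₂,ω₃,ω₄}, partitions Π₁ = {{ω₁,ω₂},{ω₃,ω₄}}, Π₂ = {{ω₁,ω₄},{ω₂,ω₃}}, and types t₁(ω₁)=t₁(ω₂)=(1/2,1/2,0,0), t₁(ω₃)=t₁(ω₄)=(0,0,1/2,1/2), t₂(ω₁)=t₂(ω₄)=(1/2,0,0,1/2), t₂(ω₂)=t₂(ω₃)=(0,1,0,0), there exists no probability distribution p on Ω lying in the convex hull of player 1's types and simultaneously in the convex hull of player 2's types. -/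
open Finset

/-- Player 1's types in the four-state example. -/
noncomputable def t1Ex : Fin 4 → Fin 4 → ℝ :=
  ![![1/2, 1/2, 0, 0], ![1/2, 1/2, 0, 0], ![0, 0, 1/2, 1/2], ![0, 0, 1/2, 1/2]]

/-- Player 2's types in the four-state example. -/
noncomputable def t2Ex : Fin 4 → Fin 4 → ℝ :=
  ![![1/2, 0, 0, 1/2], ![0, 1, 0, 0], ![0, 1, 0, 0], ![1/2, 0, 0, 1/2]]

/-!
Every type of player 1 satisfies the linear equations `q 0 = q 1` and `q 2 = q 3`, and every
type of player 2 satisfies `q 0 = q 3` and `q 2 = 0`. Linear equations pass to convex hulls, so a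
common point `p` has all four coordinates equal to `p 2 = 0` and cannot sum to `1`.
-/

theorem Set.EqOn.convexHull {𝕜 E F : Type*} [Semiring 𝕜] [PartialOrder 𝕜] [AddCommMonoid E]
    [Module 𝕜 E] [AddCommMonoid F] [Module 𝕜 F] {f g : E →ₗ[𝕜] F} {s : Set E}
    (h : Set.EqOn f g s) : Set.EqOn f g (convexHull 𝕜 s) :=
  convexHull_min h (LinearMap.eqLocus f g).convex

section Coordinates

variable {ι 𝕜 : Type*} [Semiring 𝕜] [PartialOrder 𝕜] {s : Set (ι → 𝕜)} {p : ι → 𝕜}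

theorem apply_eq_apply_of_mem_convexHull {i j : ι} (hs : ∀ q ∈ s, q i = q j)
    (hp : p ∈ convexHull 𝕜 s) : p i = p j :=
  Set.EqOn.convexHull (f := LinearMap.proj (R := 𝕜) (φ := fun _ ↦ 𝕜) i) (g := LinearMap.proj j)
    hs hp

theorem apply_eq_zero_of_mem_convexHull {i : ι} (hs : ∀ q ∈ s, q i = 0)
    (hp : p ∈ convexHull 𝕜 s) : p i = 0 :=
  Set.EqOn.convexHull (f := LinearMap.proj (R := 𝕜) (φ := fun _ ↦ 𝕜) i) (g := 0) hs hp

end Coordinates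

/-- there is no probability distribution lying simultaneously in the convex
hull of player 1's types and in the convex hull of player 2's types. -/
theorem stmt_7 :
    ¬ ∃ p : Fin 4 → ℝ, (∀ a, 0 ≤ p a) ∧ (∑ a, p a = 1) ∧
      p ∈ convexHull ℝ (Set.range t1Ex) ∧ p ∈ convexHull ℝ (Set.range t2Ex) := by
  rintro ⟨p, -, hsum, h1, h2⟩
  have h01 : p 0 = p 1 := apply_eq_apply_of_mem_convexHull (by simp [t1Ex]) h1
  have h23 : p 2 = p 3 := apply_eq_apply_of_mem_convexHull (by simp [t1Ex]) h1
  have h03 : p 0 = p 3 := apply_eq_apply_of_mem_convexHull (by simp [t2Ex]) h2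
  have h2z : p 2 = 0 := apply_eq_zero_of_mem_convexHull (by simp [t2Ex]) h2
  rw [Fin.sum_univ_four] at hsum
  linarith
end

section
/- For a finite two-player type space, the following are mutually exclusive and exhaustive: (1) there exists a probability distribution p lying in conv{t₁(ω,·) : ω ∈ Ω} ∩ conv{t₂(ω,·) : ω ∈ Ω}; (2) there exists f : Ω → ℝ such that Σ_{ω'} f(ω') t₁(ω,{ω'}) > 0 and Σ_{ω'} f(ω') t₂(ω,{ω'}) < 0 for every ω ∈ Ω. -/
/-!
Both alternatives are statements about the convex hulls `C₁`, `C₂` of the two finite sets of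
types. A bet `f` is the linear functional `x ↦ f ⬝ᵥ x`, positive on `C₁` and negative on `C₂`, so
(1) and (2) exclude each other. Conversely, if `C₁` and `C₂` are disjoint, Hahn–Banach strictly
separates these compact convex sets by a functional `g` and a level `c`; since every type sums
to `1`, `g - c` agrees on types with the linear functional of the bet `f a = g (δₐ) - c`.
-/

open Matrix

section Separation

variable {E : Type*} [AddCommGroup E] [Module ℝ E]

theorem disjoint_convexHull_of_pos_of_neg (φ : E →ₗ[ℝ] ℝ) {S T : Set E}
    (hS : ∀ x ∈ S, 0 < φ x) (hT : ∀ y ∈ T, φ y < 0) :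
    Disjoint (convexHull ℝ S) (convexHull ℝ T) := by
  have hS' : convexHull ℝ S ⊆ φ ⁻¹' Set.Ioi 0 :=
    convexHull_min hS ((convex_Ioi 0).linear_preimage φ)
  have hT' : convexHull ℝ T ⊆ φ ⁻¹' Set.Iio 0 :=
    convexHull_min hT ((convex_Iio 0).linear_preimage φ)
  exact Set.disjoint_of_subset hS' hT' <|
    Set.disjoint_left.2 fun x (hpos : 0 < φ x) (hneg : φ x < 0) => lt_asymm hpos hneg

variable [TopologicalSpace E] [IsTopologicalAddGroup E] [ContinuousSMul ℝ E]
  [LocallyConvexSpace ℝ E] [T2Space E]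

theorem Set.Finite.exists_strict_separation {S T : Set E} (hS : S.Finite) (hT : T.Finite)
    (hST : Disjoint (convexHull ℝ S) (convexHull ℝ T)) :
    ∃ (g : StrongDual ℝ E) (c : ℝ), (∀ x ∈ S, c < g x) ∧ ∀ y ∈ T, g y < c := by
  obtain ⟨g, u, v, hgu, huv, hvg⟩ :=
    geometric_hahn_banach_compact_closed (convex_convexHull ℝ T) (hT.isCompact_convexHull ℝ)
      (convex_convexHull ℝ S) (hS.isClosed_convexHull ℝ) hST.symm
  refine ⟨g, (u + v) / 2, fun x hx => ?_, fun y hy => ?_⟩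
  · linarith [hvg x (subset_convexHull ℝ S hx)]
  · linarith [hgu y (subset_convexHull ℝ T hy)]

end Separation

theorem map_eq_dotProduct {R Ω F : Type*} [CommSemiring R] [Fintype Ω] [DecidableEq Ω]
    [FunLike F (Ω → R) R] [LinearMapClass F R (Ω → R) R] (g : F) (x : Ω → R) :
    g x = (fun a => g (Pi.single a 1)) ⬝ᵥ x := by
  conv_lhs => rw [pi_eq_sum_univ' x]
  simp only [map_sum, map_smul, smul_eq_mul, dotProduct, mul_comm]

theorem dotProduct_sub_const_of_sum_eq_one {R Ω : Type*} [CommRing R] [Fintype Ω]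
    (f : Ω → R) (c : R) {x : Ω → R} (hx : ∑ a, x a = 1) :
    (fun a => f a - c) ⬝ᵥ x = f ⬝ᵥ x - c := by
  simp only [dotProduct, sub_mul, Finset.sum_sub_distrib, ← Finset.mul_sum, hx, mul_one]

theorem disjoint_convexHull_iff_exists_dotProduct_pos_neg {Ω : Type*} [Fintype Ω]
    {S T : Set (Ω → ℝ)} (hS : S.Finite) (hT : T.Finite)
    (hS₁ : ∀ x ∈ S, ∑ a, x a = 1) (hT₁ : ∀ y ∈ T, ∑ a, y a = 1) :
    Disjoint (convexHull ℝ S) (convexHull ℝ T) ↔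
      ∃ f : Ω → ℝ, (∀ x ∈ S, 0 < f ⬝ᵥ x) ∧ ∀ y ∈ T, f ⬝ᵥ y < 0 := by
  classical
  refine ⟨fun hST => ?_, fun ⟨f, hfS, hfT⟩ => disjoint_convexHull_of_pos_of_neg
    (dotProductBilin ℝ ℝ f) hfS hfT⟩
  obtain ⟨g, c, hgS, hgT⟩ := hS.exists_strict_separation hT hST
  refine ⟨fun a => g (Pi.single a 1) - c, fun x hx => ?_, fun y hy => ?_⟩
  · rw [dotProduct_sub_const_of_sum_eq_one _ _ (hS₁ x hx), ← map_eq_dotProduct]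
    linarith [hgS x hx]
  · rw [dotProduct_sub_const_of_sum_eq_one _ _ (hT₁ y hy), ← map_eq_dotProduct]
    linarith [hgT y hy]

theorem stmt_9_general {Ω : Type*} [Fintype Ω]
    (t1 t2 : Ω → Ω → ℝ)
    (h11 : ∀ ω, ∑ a, t1 ω a = 1)
    (h21 : ∀ ω, ∑ a, t2 ω a = 1) :
    Xor'
      (∃ p : Ω → ℝ, p ∈ convexHull ℝ (Set.range t1) ∧ p ∈ convexHull ℝ (Set.range t2))
      (∃ f : Ω → ℝ, ∀ ω, (0 < ∑ a, f a * t1 ω a) ∧ (∑ a, f a * t2 ω a < 0)) := by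
  have hsep := disjoint_convexHull_iff_exists_dotProduct_pos_neg (Set.finite_range t1)
    (Set.finite_range t2) (Set.forall_mem_range.2 h11) (Set.forall_mem_range.2 h21)
  simp only [Set.forall_mem_range, ← forall_and] at hsep
  exact xor_iff_iff_not.2 (Set.not_disjoint_iff.symm.trans (not_congr hsep))

/-- the finite no-bet theorem for two players.  Exactly one of the following
holds: (1) some probability distribution lies in the convex hulls of both players' types
(beliefs are consistent); (2) there is an agreeable bet `(f, −f)`. -/
theorem stmt_9 {Ω : Type*} [Fintype Ω] [DecidableEq Ω] [Nonempty Ω]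
    (r1 r2 : Ω → Ω → Prop) (hr1 : Equivalence r1) (hr2 : Equivalence r2)
    (t1 t2 : Ω → Ω → ℝ)
    (h10 : ∀ ω a, 0 ≤ t1 ω a) (h11 : ∀ ω, ∑ a, t1 ω a = 1)
    (h20 : ∀ ω a, 0 ≤ t2 ω a) (h21 : ∀ ω, ∑ a, t2 ω a = 1)
    (h1c : ∀ ω ω', r1 ω ω' → t1 ω = t1 ω') (h1s : ∀ ω a, ¬ r1 ω a → t1 ω a = 0)
    (h2c : ∀ ω ω', r2 ω ω' → t2 ω = t2 ω') (h2s : ∀ ω a, ¬ r2 ω a → t2 ω a = 0) :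
    Xor'
      (∃ p : Ω → ℝ, p ∈ convexHull ℝ (Set.range t1) ∧ p ∈ convexHull ℝ (Set.range t2))
      (∃ f : Ω → ℝ, ∀ ω, (0 < ∑ a, f a * t1 ω a) ∧ (∑ a, f a * t2 ω a < 0)) :=
  stmt_9_general t1 t2 h11 h21
end

section
/- Let X be a locally convex topological vector space (e.g., a dual space with its weak* topology) and E₁, E₂ ⊆ X. The closed cones of E₁ and E₂ can be properly separated (there exists a continuous linear functional g with g ≥ 0 on the closure of cone(E₁), g ≤ 0 on the closure of cone(E₂), and g not identically zero on their union) if and only if there exists x* ∈ E₁ with x* not in the closure of cone(E₂ ∪ −(E₁ \ {x*})), or there exists x* ∈ E₂ with x* not in the closure of cone(E₁ ∪ −(E₂ \ {x*})). -/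
/-! A continuous functional that is nonnegative on a set is nonnegative on the closure of its
cone, so proper separation is a condition on the generators alone: `g ≥ 0` on `E₁`, `g ≤ 0` on
`E₂`, and `g ≠ 0` at some point of `E₁ ∪ E₂`. For `x* ∈ E₁`, a functional of this kind with
`g x* > 0` is exactly one that is `≤ 0` on `E₂ ∪ −(E₁ \ {x*})` and `> 0` at `x*`, and by Farkas'
lemma (Hahn–Banach separation from a closed convex cone) such a functional exists iff `x*` lies
outside the closed cone of that set. The case `x* ∈ E₂` is the same after `g ↦ −g`. -/

/-- The conic hull of a set: all finite non-negative linear combinations. -/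
def coneHull {X : Type*} [AddCommMonoid X] [Module ℝ X] (B : Set X) : Set X :=
  {x | ∃ (n : ℕ) (c : Fin n → ℝ) (v : Fin n → X),
    (∀ i, 0 ≤ c i) ∧ (∀ i, v i ∈ B) ∧ x = ∑ i, c i • v i}

/-- The closed cones of `E₁` and `E₂` are properly separated: some continuous linear
functional is `≥ 0` on the first, `≤ 0` on the second, and not identically zero on their
union. -/
def ProperlySeparable {X : Type*} [AddCommGroup X] [Module ℝ X] [TopologicalSpace X]
    (E₁ E₂ : Set X) : Prop :=
  ∃ g : X →L[ℝ] ℝ,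
    (∀ x ∈ closure (coneHull E₁), 0 ≤ g x) ∧
    (∀ y ∈ closure (coneHull E₂), g y ≤ 0) ∧
    ∃ z ∈ closure (coneHull E₁) ∪ closure (coneHull E₂), g z ≠ 0

section

variable {X : Type*} [AddCommGroup X] [Module ℝ X]

theorem PointedCone.coe_hull_eq_coneHull (B : Set X) :
    (PointedCone.hull ℝ B : Set X) = coneHull B := by
  ext x
  simp only [SetLike.mem_coe, Submodule.mem_span_set']
  constructor
  · rintro ⟨n, c, v, rfl⟩
    exact ⟨n, fun i => c i, fun i => v i, fun i => (c i).2, fun i => (v i).2,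
      by simp only [Nonneg.coe_smul]⟩
  · rintro ⟨n, c, v, hc, hv, rfl⟩
    exact ⟨n, fun i => ⟨c i, hc i⟩, fun i => ⟨v i, hv i⟩, by simp only [Nonneg.mk_smul]⟩

variable [TopologicalSpace X]

theorem subset_closure_coneHull {B : Set X} : B ⊆ closure (coneHull B) := by
  rw [← PointedCone.coe_hull_eq_coneHull]
  exact PointedCone.subset_hull.trans subset_closure

variable [IsTopologicalAddGroup X] [ContinuousSMul ℝ X]

theorem map_nonneg_of_mem_closure_coneHull {B : Set X} (g : X →L[ℝ] ℝ)
    (hB : ∀ y ∈ B, 0 ≤ g y) {x : X} (hx : x ∈ closure (coneHull B)) : 0 ≤ g x := by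
  have hle : Submodule.closure (PointedCone.hull ℝ B) ≤ (ProperCone.positive ℝ ℝ).comap g :=
    Submodule.closure_le.2 (Submodule.span_le.2 hB)
  exact hle (by rwa [← PointedCone.coe_hull_eq_coneHull] at hx)

theorem map_nonpos_of_mem_closure_coneHull {B : Set X} (g : X →L[ℝ] ℝ)
    (hB : ∀ y ∈ B, g y ≤ 0) {x : X} (hx : x ∈ closure (coneHull B)) : g x ≤ 0 := by
  simpa using map_nonneg_of_mem_closure_coneHull (-g) (by simpa using hB) hx

theorem notMem_closure_coneHull_iff [LocallyConvexSpace ℝ X] {B : Set X} {x : X} :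
    x ∉ closure (coneHull B) ↔ ∃ g : X →L[ℝ] ℝ, (∀ y ∈ B, g y ≤ 0) ∧ 0 < g x := by
  constructor
  · intro hx
    rw [← PointedCone.coe_hull_eq_coneHull] at hx
    obtain ⟨f, hf, hfx⟩ := ProperCone.hyperplane_separation_point
      (Submodule.closure (PointedCone.hull ℝ B)) hx
    exact ⟨-f, fun y hy => by simpa using hf y (subset_closure (PointedCone.subset_hull hy)),
      by simpa using hfx⟩
  · rintro ⟨g, hB, hgx⟩ hx
    exact (map_nonpos_of_mem_closure_coneHull g hB hx).not_gt hgx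

theorem map_eq_zero_of_mem_closure_coneHull {B : Set X} (g : X →L[ℝ] ℝ)
    (hB : ∀ y ∈ B, g y = 0) {x : X} (hx : x ∈ closure (coneHull B)) : g x = 0 :=
  le_antisymm (map_nonpos_of_mem_closure_coneHull g (fun y hy => (hB y hy).le) hx)
    (map_nonneg_of_mem_closure_coneHull g (fun y hy => (hB y hy).ge) hx)

theorem properlySeparable_iff {E₁ E₂ : Set X} :
    ProperlySeparable E₁ E₂ ↔ ∃ g : X →L[ℝ] ℝ,
      (∀ x ∈ E₁, 0 ≤ g x) ∧ (∀ y ∈ E₂, g y ≤ 0) ∧ ∃ z ∈ E₁ ∪ E₂, g z ≠ 0 := by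
  constructor
  · rintro ⟨g, h₁, h₂, hz⟩
    refine ⟨g, fun x hx => h₁ x (subset_closure_coneHull hx),
      fun y hy => h₂ y (subset_closure_coneHull hy), ?_⟩
    by_contra! hzero
    obtain ⟨z, hz | hz, hgz⟩ := hz
    · exact hgz (map_eq_zero_of_mem_closure_coneHull g (fun y hy => hzero y (.inl hy)) hz)
    · exact hgz (map_eq_zero_of_mem_closure_coneHull g (fun y hy => hzero y (.inr hy)) hz)
  · rintro ⟨g, h₁, h₂, z, hz, hgz⟩
    refine ⟨g, fun _ => map_nonneg_of_mem_closure_coneHull g h₁,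
      fun _ => map_nonpos_of_mem_closure_coneHull g h₂, z, ?_, hgz⟩
    exact hz.imp (fun h => subset_closure_coneHull h) (fun h => subset_closure_coneHull h)

theorem notMem_closure_coneHull_union_neg_iff [LocallyConvexSpace ℝ X] {E₁ E₂ : Set X}
    {xs : X} : xs ∉ closure (coneHull (E₂ ∪ -(E₁ \ {xs}))) ↔ ∃ g : X →L[ℝ] ℝ,
      (∀ x ∈ E₁, 0 ≤ g x) ∧ (∀ y ∈ E₂, g y ≤ 0) ∧ 0 < g xs := by
  rw [notMem_closure_coneHull_iff]
  refine exists_congr fun g => ?_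
  simp only [Set.mem_union, or_imp, forall_and, Set.mem_neg, Set.mem_sdiff, Set.mem_singleton_iff]
  constructor
  · rintro ⟨⟨h₂, h₁⟩, hxs⟩
    refine ⟨fun x hx => ?_, h₂, hxs⟩
    rcases eq_or_ne x xs with rfl | hne
    · exact hxs.le
    · simpa using h₁ (-x) ⟨by simpa using hx, by simpa using hne⟩
  · rintro ⟨h₁, h₂, hxs⟩
    exact ⟨⟨h₂, fun y hy => by simpa using h₁ (-y) hy.1⟩, hxs⟩

end

/-- Theorem B.1: in a locally convex topological vector space, the closed
cones of `E₁` and `E₂` can be properly separated iff there exists `x* ∈ E₁` with `x*` not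
in the closure of `cone(E₂ ∪ −(E₁ \ {x*}))`, or `x* ∈ E₂` with `x*` not in the closure of
`cone(E₁ ∪ −(E₂ \ {x*}))`. -/
theorem stmt_17 {X : Type*} [AddCommGroup X] [Module ℝ X] [TopologicalSpace X]
    [IsTopologicalAddGroup X] [ContinuousSMul ℝ X] [LocallyConvexSpace ℝ X]
    (E₁ E₂ : Set X) :
    ProperlySeparable E₁ E₂ ↔
      (∃ xs ∈ E₁, xs ∉ closure (coneHull (E₂ ∪ -(E₁ \ {xs})))) ∨
      (∃ xs ∈ E₂, xs ∉ closure (coneHull (E₁ ∪ -(E₂ \ {xs})))) := by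
  simp only [properlySeparable_iff, notMem_closure_coneHull_union_neg_iff]
  constructor
  · rintro ⟨g, h₁, h₂, z, hz | hz, hgz⟩
    · exact .inl ⟨z, hz, g, h₁, h₂, (h₁ z hz).lt_of_ne' hgz⟩
    · exact .inr ⟨z, hz, -g, by simpa using h₂, by simpa using h₁,
        by simpa using (h₂ z hz).lt_of_ne hgz⟩
  · rintro (⟨xs, hxs, g, h₁, h₂, hg⟩ | ⟨xs, hxs, g, h₂, h₁, hg⟩)
    · exact ⟨g, h₁, h₂, xs, .inl hxs, hg.ne'⟩
    · exact ⟨-g, by simpa using h₁, by simpa using h₂, xs, .inr hxs, by simpa using hg.ne'⟩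
end

section
/- In the two-player type space where both players are identical, Ω = [0,1], the knowledge σ-field ℳ is the Borel σ-field of [0,1], and both type functions are t(ω,·) = δ_ω: every singleton {ω} is a common certainty component, and the beliefs are universally consistent (for each common certainty component S and each ω ∈ S, δ_ω witnesses consistency of the restricted type space), but there exists no probability measure μ on the Borel σ-field of [0,1] with μ({ω}) > 0 for every ω ∈ [0,1]; hence no single probability distribution witnesses the universal consistency. -/
open MeasureTheory

/-- The state space `Ω = [0,1]` (with its Borel σ-field). -/
abbrev Ω18 : Type := Set.Icc (0 : ℝ) 1

/-- `S` is a common certainty component of the two identical Dirac players: there is a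
measurable `E ⊆ S` with `δ_ω(E) = 1` for every `ω ∈ S`. -/
def IsCCC18 (S : Set Ω18) : Prop :=
  S.Nonempty ∧ ∃ E, MeasurableSet E ∧ E ⊆ S ∧ ∀ ω ∈ S, Measure.dirac ω E = 1

/-- every singleton is a common certainty component; for every common
certainty component `S` and `ω ∈ S`, the Dirac measure `δ_ω` witnesses consistency of the
restricted type space (it is disintegrable w.r.t. the Dirac beliefs); yet no probability
measure assigns positive mass to every singleton, so no single probability distribution
witnesses universal consistency. -/
theorem stmt_18 :
    (∀ ω : Ω18, IsCCC18 {ω}) ∧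
    (∀ S : Set Ω18, IsCCC18 S → ∀ ω ∈ S,
      ∀ E F : Set Ω18, MeasurableSet E → MeasurableSet F →
        Measure.dirac ω (E ∩ F) = ∫⁻ x in F, Measure.dirac x E ∂(Measure.dirac ω)) ∧
    ¬ ∃ μ : Measure Ω18, IsProbabilityMeasure μ ∧ ∀ ω : Ω18, 0 < μ {ω} := by
  refine ⟨?_, ?_, ?_⟩
  · intro ω
    exact ⟨⟨ω, rfl⟩, {ω}, measurableSet_singleton ω, subset_rfl,
      fun x hx => by simp [Set.mem_singleton_iff.mp hx]⟩
  · intro S _ ω hω E F hE hF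
    classical
    rw [setLIntegral_dirac]
    by_cases hωF : ω ∈ F <;> by_cases hωE : ω ∈ E <;>
      simp [Measure.dirac_apply, Set.indicator, hωF, hωE]
  · rintro ⟨μ, hμ, hpos⟩
    have hcount : Set.Countable {ω : Ω18 | 0 < μ {ω}} :=
      Measure.countable_meas_pos_of_disjoint_iUnion
        (fun ω => measurableSet_singleton ω)
        (fun a b hab => by simp [Function.onFun, Set.disjoint_singleton, hab])
    have : Set.Countable (Set.univ : Set Ω18) := by
      have : {ω : Ω18 | 0 < μ {ω}} = Set.univ := Set.eq_univ_of_forall hpos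
      rwa [this] at hcount
    have : Countable Ω18 := Set.countable_univ_iff.mp this
    have h1 : (Cardinal.mk Ω18) = Cardinal.continuum := Cardinal.mk_Icc_real (by norm_num)
    have h2 : Cardinal.mk Ω18 ≤ Cardinal.aleph0 := Cardinal.mk_le_aleph0
    rw [h1] at h2
    exact absurd h2 (not_le.mpr Cardinal.aleph0_lt_continuum)
end
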